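/- arXiv:1507.06165 — 7 statements merged into one kernel-verified Lean document; each statement's English description precedes it below -/
import Mathlib

section
/- Let F be a field, t a natural number, and N a finite subset of F with |N| ≥ t+1. Suppose {f_i}_{i∈N} is a family of univariate polynomials over F, each of degree at most t, such that f_i(j) = f_j(i) for all i, j ∈ N. Then there exists a unique bivariate polynomial f over F of degree at most t in each variable, symmetric (f(x,y) = f(y,x)), such that f(i,j) = f_i(j) for all i, j ∈ N. -/
/-!
Pick `t + 1` nodes `S ⊆ N` and put `g(X, Y) = ∑_{i ∈ S} Lᵢ(X) fᵢ(Y)`, with `Lᵢ` the Lagrange basis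
of `S`. For `x, y ∈ N` the symmetry `fᵢ(y) = f_y(i)` turns `g(x, y)` into the Lagrange
interpolation of `f_y` at `x`, which is `f_y(x) = f_x(y)` because `deg f_y ≤ t`. Symmetry of `g`
and uniqueness then both follow from the fact that a polynomial of degree at most `t < |N|` in
each variable which vanishes on `N × N` is zero.
-/

/-- A bivariate polynomial (in variables `X 0`, `X 1`) is symmetric if swapping
the two variables leaves it unchanged. -/
def MvSymm {F : Type*} [CommSemiring F] (g : MvPolynomial (Fin 2) F) : Prop :=
  MvPolynomial.rename (Equiv.swap (0 : Fin 2) 1) g = g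

open MvPolynomial Finset

section AevalX

variable {R σ : Type*} [CommSemiring R]

lemma degreeOf_aeval_X_self_le [Nontrivial R] (p : Polynomial R) (i : σ) :
    degreeOf i (Polynomial.aeval (X i : MvPolynomial σ R) p) ≤ p.natDegree := by
  rw [Polynomial.aeval_eq_sum_range]
  refine (degreeOf_sum_le _ _ _).trans (Finset.sup_le fun n hn => ?_)
  rw [smul_eq_C_mul]
  refine (degreeOf_C_mul_le _ _ _).trans ?_
  rw [degreeOf_X_self_pow]
  exact Nat.lt_succ_iff.mp (mem_range.mp hn)

lemma degreeOf_aeval_X_of_ne (p : Polynomial R) {i j : σ} (h : i ≠ j) :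
    degreeOf i (Polynomial.aeval (X j : MvPolynomial σ R) p) = 0 := by
  rw [Polynomial.aeval_eq_sum_range]
  refine Nat.eq_zero_of_le_zero ((degreeOf_sum_le _ _ _).trans (Finset.sup_le fun n _ => ?_))
  rw [smul_eq_C_mul]
  exact (degreeOf_C_mul_le _ _ _).trans (degreeOf_X_pow_of_ne n h).le

lemma eval_aeval_X (v : σ → R) (p : Polynomial R) (i : σ) :
    eval v (Polynomial.aeval (X i : MvPolynomial σ R) p) = p.eval (v i) := by
  simpa using (Polynomial.aeval_algHom_apply (aeval v) (X i) p).symm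

end AevalX

section Square

variable {R : Type*} [CommRing R] [IsDomain R]

lemma eq_of_eval_eq_on_square {p q : MvPolynomial (Fin 2) R} {S : Finset R} {t : ℕ}
    (hS : t < #S) (hp : ∀ k, degreeOf k p ≤ t) (hq : ∀ k, degreeOf k q ≤ t)
    (h : ∀ i ∈ S, ∀ j ∈ S, eval ![i, j] p = eval ![i, j] q) : p = q := by
  refine sub_eq_zero.mp <| eq_zero_of_eval_zero_at_prod_finset _ (fun _ => S)
    (fun k => (degreeOf_sub_le k p q).trans_lt ((max_le (hp k) (hq k)).trans_lt hS))
    fun x hx => ?_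
  have hx' : x = ![x 0, x 1] := by ext k; fin_cases k <;> rfl
  rw [map_sub, hx', h _ (hx 0) _ (hx 1), sub_self]

lemma mvSymm_of_eval_swap {g : MvPolynomial (Fin 2) R} {S : Finset R} {t : ℕ} (hS : t < #S)
    (hg : ∀ k, degreeOf k g ≤ t) (h : ∀ i ∈ S, ∀ j ∈ S, eval ![i, j] g = eval ![j, i] g) :
    MvSymm g := by
  refine eq_of_eval_eq_on_square hS (fun k => ?_) hg fun i hi j hj => ?_
  · have hrename := degreeOf_rename_of_injective (Equiv.swap (0 : Fin 2) 1).injective (p := g)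
      (Equiv.swap 0 1 k)
    rw [Equiv.swap_apply_self] at hrename
    exact hrename ▸ hg _
  · have hswap : ![i, j] ∘ Equiv.swap (0 : Fin 2) 1 = ![j, i] := by
      ext k; fin_cases k <;> rfl
    rw [eval_rename, hswap, h i hi j hj]

end Square

section Interpolant

variable {F : Type*} [Field F] [DecidableEq F]

lemma sum_eval_basis_mul_eval {S : Finset F} {p : Polynomial F} (hp : p.degree < #S) (x : F) :
    ∑ i ∈ S, (Lagrange.basis S id i).eval x * p.eval i = p.eval x := by
  conv_rhs => rw [Lagrange.eq_interpolate Function.injective_id.injOn hp]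
  simp [Lagrange.interpolate_apply, Polynomial.eval_finsetSum, mul_comm]

noncomputable def bivariateInterpolant (S : Finset F) (f : F → Polynomial F) :
    MvPolynomial (Fin 2) F :=
  ∑ i ∈ S, Polynomial.aeval (X 0) (Lagrange.basis S id i) * Polynomial.aeval (X 1) (f i)

lemma eval_bivariateInterpolant (S : Finset F) (f : F → Polynomial F) (x y : F) :
    eval ![x, y] (bivariateInterpolant S f)
      = ∑ i ∈ S, (Lagrange.basis S id i).eval x * (f i).eval y := by
  simp [bivariateInterpolant, eval_aeval_X]

lemma degreeOf_bivariateInterpolant_le {S : Finset F} {f : F → Polynomial F} {t : ℕ}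
    (hS : #S ≤ t + 1) (hf : ∀ i ∈ S, (f i).natDegree ≤ t) :
    ∀ k, degreeOf k (bivariateInterpolant S f) ≤ t := by
  have hterm : ∀ i ∈ S, ∀ k, degreeOf k
      (Polynomial.aeval (X 0 : MvPolynomial (Fin 2) F) (Lagrange.basis S id i) *
        Polynomial.aeval (X 1) (f i)) ≤ t := by
    intro i hi
    have hL : (Lagrange.basis S id i).natDegree ≤ t := by
      rw [Lagrange.natDegree_basis Function.injective_id.injOn hi]
      omega
    refine Fin.forall_fin_two.2 ⟨(degreeOf_mul_le _ _ _).trans ?_, (degreeOf_mul_le _ _ _).trans ?_⟩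
    · rw [degreeOf_aeval_X_of_ne _ zero_ne_one, add_zero]
      exact (degreeOf_aeval_X_self_le _ 0).trans hL
    · rw [degreeOf_aeval_X_of_ne _ one_ne_zero, zero_add]
      exact (degreeOf_aeval_X_self_le _ 1).trans (hf i hi)
  exact fun k => (degreeOf_sum_le _ _ _).trans (Finset.sup_le fun i hi => hterm i hi k)

lemma eval_bivariateInterpolant_of_eval_comm {S N : Finset F} {f : F → Polynomial F} {t : ℕ}
    (hSN : S ⊆ N) (hS : t < #S) (hdeg : ∀ i ∈ N, (f i).natDegree ≤ t)
    (hsym : ∀ i ∈ N, ∀ j ∈ N, (f i).eval j = (f j).eval i) {x y : F} (hx : x ∈ N) (hy : y ∈ N) :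
    eval ![x, y] (bivariateInterpolant S f) = (f x).eval y := by
  have hy_deg : (f y).degree < #S :=
    Polynomial.degree_le_natDegree.trans_lt (by exact_mod_cast (hdeg y hy).trans_lt hS)
  calc eval ![x, y] (bivariateInterpolant S f)
      = ∑ i ∈ S, (Lagrange.basis S id i).eval x * (f y).eval i := by
        rw [eval_bivariateInterpolant]
        exact sum_congr rfl fun i hi => by rw [hsym i (hSN hi) y hy]
    _ = (f y).eval x := sum_eval_basis_mul_eval hy_deg x
    _ = (f x).eval y := hsym y hy x hx

end Interpolant

theorem stmt_0 (F : Type*) [Field F] (t : ℕ) (N : Finset F) (hN : t + 1 ≤ N.card)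
    (f : F → Polynomial F)
    (hdeg : ∀ i ∈ N, (f i).natDegree ≤ t)
    (hsym : ∀ i ∈ N, ∀ j ∈ N, (f i).eval j = (f j).eval i) :
    ∃! g : MvPolynomial (Fin 2) F,
      MvPolynomial.degreeOf 0 g ≤ t ∧ MvPolynomial.degreeOf 1 g ≤ t ∧
      MvSymm g ∧
      ∀ i ∈ N, ∀ j ∈ N, MvPolynomial.eval ![i, j] g = (f i).eval j := by
  classical
  obtain ⟨S, hSN, hScard⟩ := exists_subset_card_eq hN
  have hN' : t < #N := hN
  set g := bivariateInterpolant S f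
  have hg_deg : ∀ k, degreeOf k g ≤ t :=
    degreeOf_bivariateInterpolant_le hScard.le fun i hi => hdeg i (hSN hi)
  have hg_eval : ∀ i ∈ N, ∀ j ∈ N, eval ![i, j] g = (f i).eval j := fun i hi j hj =>
    eval_bivariateInterpolant_of_eval_comm hSN (by omega) hdeg hsym hi hj
  refine ⟨g, ⟨hg_deg 0, hg_deg 1, ?_, hg_eval⟩, ?_⟩
  · refine mvSymm_of_eval_swap hN' hg_deg fun i hi j hj => ?_
    rw [hg_eval i hi j hj, hg_eval j hj i hi, hsym i hi j hj]
  · rintro g' ⟨h0, h1, -, hg'⟩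
    refine eq_of_eval_eq_on_square hN' (Fin.forall_fin_two.2 ⟨h0, h1⟩) hg_deg fun i hi j hj => ?_
    rw [hg' i hi j hj, hg_eval i hi j hj]
end

section
/- Let F be a field, t a natural number, and N₀ ⊆ F with |N₀| = t+1. Suppose {f_i}_{i∈N₀} are univariate degree-≤t polynomials with f_i(j) = f_j(i) for all i,j ∈ N₀, and let f₀ be the bivariate Lagrange interpolation polynomial defined by f₀(x,y) = Σ_{i,j∈N₀} f_i(j)·∏_{k∈N₀,k≠i}(x−k)/(i−k)·∏_{k∈N₀,k≠j}(y−k)/(j−k). Then f₀ is symmetric and for every i ∈ N₀ (indeed every i for which f_i(j)=f₀(j,i) holds for all j∈N₀), the univariate polynomial y ↦ f₀(i,y) equals f_i. -/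
/-!
With `L_i` the Lagrange basis of the nodes `N₀`, the polynomial `f₀` is
`∑ c i j • L_i(x) L_j(y)` with `c i j = f_i(j)`. Swapping the variables transposes `c`, so the
symmetry `f_i(j) = f_j(i)` makes `f₀` symmetric, and `f₀(a, b) = c a b` on the grid `N₀ × N₀`.
Every slice `y ↦ f₀(i, y)` is a Lagrange interpolant on `N₀`, hence of degree `≤ t`; by symmetry
it agrees with `f_i` at the `t + 1` nodes whenever `f_i(j) = f₀(j, i)` there, so it is `f_i`.
-/

open MvPolynomial Polynomial

theorem eval_aeval_C_X {R : Type*} [CommSemiring R] (p : MvPolynomial (Fin 2) R) (x y : R) :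
    (aeval ![Polynomial.C x, Polynomial.X] p).eval y = MvPolynomial.eval ![x, y] p := by
  induction p using MvPolynomial.induction_on with
  | C a => simp
  | add p q hp hq => simp [hp, hq]
  | mul_X p n hp => fin_cases n <;> simp [hp]

theorem eval_comm_of_rename_swap_eq {R : Type*} [CommSemiring R] {p : MvPolynomial (Fin 2) R}
    (hp : rename (Equiv.swap 0 1) p = p) (x y : R) :
    MvPolynomial.eval ![x, y] p = MvPolynomial.eval ![y, x] p := by
  have hswap : ![x, y] ∘ Equiv.swap (0 : Fin 2) 1 = ![y, x] := by
    funext k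
    fin_cases k <;> rfl
  conv_lhs => rw [← hp, eval_rename, hswap]

theorem Polynomial.aeval_C_eq_C_eval {R : Type*} [CommSemiring R] (p : R[X]) (x : R) :
    aeval (Polynomial.C x) p = Polynomial.C (p.eval x) := by
  rw [← Polynomial.algebraMap_eq, aeval_algebraMap_apply, coe_aeval_eq_eval]

section BivariateInterpolate

variable {F : Type*} [Field F] [DecidableEq F]

theorem Lagrange.basis_id_eq_C_inv_mul_prod (s : Finset F) (i : F) :
    Lagrange.basis s id i =
      Polynomial.C (∏ k ∈ s.erase i, (i - k))⁻¹ *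
        ∏ k ∈ s.erase i, (Polynomial.X - Polynomial.C k) := by
  simp only [Lagrange.basis, Lagrange.basisDivisor, id, Finset.prod_mul_distrib, ← map_prod,
    Finset.prod_inv_distrib]

noncomputable def bivariateInterpolate (s : Finset F) (c : F → F → F) : MvPolynomial (Fin 2) F :=
  ∑ i ∈ s, ∑ j ∈ s, MvPolynomial.C (c i j) * (Lagrange.basis s id i).toMvPolynomial 0
    * (Lagrange.basis s id j).toMvPolynomial 1

theorem bivariateInterpolate_eq_sum_prod (s : Finset F) (c : F → F → F) :
    bivariateInterpolate s c = ∑ i ∈ s, ∑ j ∈ s,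
      MvPolynomial.C (c i j * (∏ k ∈ s.erase i, (i - k))⁻¹ * (∏ k ∈ s.erase j, (j - k))⁻¹)
        * (∏ k ∈ s.erase i, (MvPolynomial.X 0 - MvPolynomial.C k))
        * (∏ k ∈ s.erase j, (MvPolynomial.X 1 - MvPolynomial.C k)) := by
  refine Finset.sum_congr rfl fun i _ => Finset.sum_congr rfl fun j _ => ?_
  simp only [Lagrange.basis_id_eq_C_inv_mul_prod, map_mul, map_prod, map_sub, toMvPolynomial_C,
    toMvPolynomial_X]
  ring

theorem rename_swap_bivariateInterpolate {s : Finset F} {c : F → F → F}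
    (hc : ∀ i ∈ s, ∀ j ∈ s, c i j = c j i) :
    rename (Equiv.swap 0 1) (bivariateInterpolate s c) = bivariateInterpolate s c := by
  simp only [bivariateInterpolate, map_sum, map_mul, rename_C, rename_toMvPolynomial,
    Equiv.swap_apply_left, Equiv.swap_apply_right]
  rw [Finset.sum_comm]
  refine Finset.sum_congr rfl fun i hi => Finset.sum_congr rfl fun j hj => ?_
  rw [hc j hj i hi]
  ring

theorem eval_bivariateInterpolate (s : Finset F) (c : F → F → F) (x y : F) :
    MvPolynomial.eval ![x, y] (bivariateInterpolate s c) =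
      ∑ i ∈ s, ∑ j ∈ s,
        c i j * (Lagrange.basis s id i).eval x * (Lagrange.basis s id j).eval y := by
  simp [bivariateInterpolate]

theorem eval_bivariateInterpolate_of_mem {s : Finset F} (c : F → F → F) {a b : F} (ha : a ∈ s)
    (hb : b ∈ s) : MvPolynomial.eval ![a, b] (bivariateInterpolate s c) = c a b := by
  have eval_basis : ∀ {i x}, i ∈ s → x ∈ s →
      (Lagrange.basis s id i).eval x = if i = x then 1 else 0 := by
    intro i x hi hx
    split_ifs with h
    · subst h
      exact Lagrange.eval_basis_self (Set.injOn_id _) hi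
    · exact Lagrange.eval_basis_of_ne (v := id) h hx
  rw [eval_bivariateInterpolate]
  simp +contextual [eval_basis, ha, hb]

theorem aeval_C_X_bivariateInterpolate (s : Finset F) (c : F → F → F) (x : F) :
    aeval ![Polynomial.C x, Polynomial.X] (bivariateInterpolate s c) =
      Lagrange.interpolate s id fun j => ∑ i ∈ s, c i j * (Lagrange.basis s id i).eval x := by
  simp only [bivariateInterpolate, map_sum, map_mul, MvPolynomial.aeval_C, aeval_toMvPolynomial,
    Lagrange.interpolate_apply, Polynomial.aeval_C_eq_C_eval, Matrix.cons_val_zero,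
    Matrix.cons_val_one, Polynomial.aeval_X_left, AlgHom.id_apply, Finset.sum_mul]
  rw [Finset.sum_comm]
  simp

theorem degree_aeval_C_X_bivariateInterpolate_lt (s : Finset F) (c : F → F → F) (x : F) :
    (aeval ![Polynomial.C x, Polynomial.X] (bivariateInterpolate s c)).degree < s.card := by
  rw [aeval_C_X_bivariateInterpolate]
  exact Lagrange.degree_interpolate_lt _ (Set.injOn_id _)

end BivariateInterpolate

theorem stmt_2 (F : Type*) [Field F] [DecidableEq F] (t : ℕ) (N₀ : Finset F)
    (hN₀ : N₀.card = t + 1)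
    (f : F → Polynomial F)
    (hdeg : ∀ i, (f i).natDegree ≤ t)
    (hsym : ∀ i ∈ N₀, ∀ j ∈ N₀, (f i).eval j = (f j).eval i)
    (f₀ : MvPolynomial (Fin 2) F)
    (hf₀ : f₀ = ∑ i ∈ N₀, ∑ j ∈ N₀,
      MvPolynomial.C ((f i).eval j
          * (∏ k ∈ N₀.erase i, (i - k))⁻¹ * (∏ k ∈ N₀.erase j, (j - k))⁻¹)
        * (∏ k ∈ N₀.erase i, (MvPolynomial.X 0 - MvPolynomial.C k))
        * (∏ k ∈ N₀.erase j, (MvPolynomial.X 1 - MvPolynomial.C k))) :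
    MvPolynomial.rename (Equiv.swap (0 : Fin 2) 1) f₀ = f₀ ∧
    (∀ i ∈ N₀, MvPolynomial.aeval ![Polynomial.C i, Polynomial.X] f₀ = f i) ∧
    (∀ i : F, (∀ j ∈ N₀, (f i).eval j = MvPolynomial.eval ![j, i] f₀) →
      MvPolynomial.aeval ![Polynomial.C i, Polynomial.X] f₀ = f i) := by
  rw [← bivariateInterpolate_eq_sum_prod N₀ fun i j => (f i).eval j] at hf₀
  have hswap : rename (Equiv.swap 0 1) f₀ = f₀ := hf₀ ▸ rename_swap_bivariateInterpolate hsym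
  have hslice (i : F) (hi : ∀ j ∈ N₀, (f i).eval j = MvPolynomial.eval ![j, i] f₀) :
      aeval ![Polynomial.C i, Polynomial.X] f₀ = f i := by
    refine Polynomial.eq_of_degrees_lt_of_eval_finset_eq N₀
      (hf₀ ▸ degree_aeval_C_X_bivariateInterpolate_lt _ _ _) ?_ fun j hj => ?_
    · rw [hN₀]
      exact degree_le_natDegree.trans_lt (by exact_mod_cast Nat.lt_succ_of_le (hdeg i))
    · rw [eval_aeval_C_X, eval_comm_of_rename_swap_eq hswap, hi j hj]
  refine ⟨hswap, fun i hi => hslice i fun j hj => ?_, hslice⟩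
  rw [hf₀, eval_bivariateInterpolate_of_mem _ hj hi, hsym i hi j hj]
end

section
/- Let n, t, h, m be natural numbers with n ≥ 3t + 1 and h ≥ n − t. Consider an h × n zero-one matrix in which every row has exactly n − t one-entries. Let m be the number of columns containing at least t + 1 one-entries. Then m ≥ n − 2t, and in particular m ≥ n/3. -/
theorem stmt_8 (n t h : ℕ) (hn : 3 * t + 1 ≤ n) (hh : n - t ≤ h)
    (A : Fin h → Fin n → Bool)
    (hrow : ∀ i, (Finset.univ.filter (fun j => A i j)).card = n - t)
    (m : ℕ)
    (hm : m = (Finset.univ.filter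
      (fun j : Fin n => t + 1 ≤ (Finset.univ.filter (fun i : Fin h => A i j)).card)).card) :
    n - 2 * t ≤ m ∧ (n : ℚ) / 3 ≤ m := by
  classical
  set c : Fin n → ℕ := fun j => (Finset.univ.filter (fun i : Fin h => A i j)).card with hc
  have key : ∑ j : Fin n, c j = h * (n - t) := by
    simp only [hc, Finset.card_filter]
    rw [Finset.sum_comm]
    have : ∀ i : Fin h, (∑ j : Fin n, if A i j then 1 else 0) = n - t := by
      intro i
      rw [← Finset.card_filter]
      exact hrow i
    simp [this, Finset.sum_const]
  have hsplit := Finset.sum_filter_add_sum_filter_not Finset.univ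
    (fun j => t + 1 ≤ c j) c
  have hm' : m = (Finset.univ.filter (fun j => t + 1 ≤ c j)).card := hm
  have h1 : ∑ j ∈ Finset.univ.filter (fun j => t + 1 ≤ c j), c j ≤ m * h := by
    rw [hm']
    calc ∑ j ∈ Finset.univ.filter (fun j => t + 1 ≤ c j), c j
        ≤ ∑ _j ∈ Finset.univ.filter (fun j => t + 1 ≤ c j), h :=
          Finset.sum_le_sum (fun j _ => by
            have := Finset.card_filter_le (Finset.univ : Finset (Fin h))
              (fun i : Fin h => A i j)
            simpa [hc] using this)
      _ = _ := by rw [Finset.sum_const, smul_eq_mul]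
  have hcard : (Finset.univ.filter (fun j => ¬ t + 1 ≤ c j)).card = n - m := by
    have := Finset.card_filter_add_card_filter_not
      (s := (Finset.univ : Finset (Fin n))) (p := fun j => t + 1 ≤ c j)
    simp only [Finset.card_univ, Fintype.card_fin] at this
    omega
  have h2 : ∑ j ∈ Finset.univ.filter (fun j => ¬ t + 1 ≤ c j), c j ≤ (n - m) * t := by
    calc ∑ j ∈ Finset.univ.filter (fun j => ¬ t + 1 ≤ c j), c j
        ≤ ∑ _j ∈ Finset.univ.filter (fun j => ¬ t + 1 ≤ c j), t :=
          Finset.sum_le_sum (fun j hj => by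
            simp only [Finset.mem_filter, not_le] at hj
            omega)
      _ = (n - m) * t := by rw [Finset.sum_const, hcard, smul_eq_mul]
  have hmn : m ≤ n := by
    rw [hm']
    have := Finset.card_filter_le (Finset.univ : Finset (Fin n)) (fun j => t + 1 ≤ c j)
    simpa using this
  have main : h * (n - t) ≤ m * h + (n - m) * t := by
    rw [← key, ← hsplit]
    exact Nat.add_le_add h1 h2
  have hZ : (h : ℤ) * ((n : ℤ) - t) ≤ m * h + ((n : ℤ) - m) * t := by
    have e1 : ((n - t : ℕ) : ℤ) = (n : ℤ) - t := by omega
    have e2 : ((n - m : ℕ) : ℤ) = (n : ℤ) - m := by omega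
    calc (h : ℤ) * ((n : ℤ) - t) = ((h * (n - t) : ℕ) : ℤ) := by push_cast [e1]; ring
      _ ≤ ((m * h + (n - m) * t : ℕ) : ℤ) := by exact_mod_cast main
      _ = m * h + ((n : ℤ) - m) * t := by push_cast [e2]; ring
  have hZ2 : (n : ℤ) - 2 * t ≤ m := by
    have hn' : 3 * (t : ℤ) + 1 ≤ n := by exact_mod_cast hn
    have hh' : (n : ℤ) - t ≤ h := by omega
    nlinarith [mul_nonneg (by positivity : (0:ℤ) ≤ (t:ℤ)) (by omega : (0:ℤ) ≤ (h:ℤ) - 2 * t)]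
  have hfirst : n - 2 * t ≤ m := by omega
  refine ⟨hfirst, ?_⟩
  have h3m : n ≤ 3 * m := by omega
  rw [div_le_iff₀ (by norm_num : (0:ℚ) < 3)]
  have : (n : ℚ) ≤ (3 * m : ℕ) := by exact_mod_cast h3m
  push_cast at this
  linarith
end

section
/- Let F be a field, t a natural number, M a finite subset of F, and for each i ∈ M let f̂_i be a univariate polynomial of degree ≤ t. Call S ⊆ M an interpolation set if |S| ≥ n − 2t and there is a symmetric bivariate polynomial g of degree ≤ t in each variable with g(i,·) = f̂_i for all i ∈ S. If S and S' are interpolation sets whose associated bivariate polynomials differ, then |S ∩ S'| ≤ t. -/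
open Polynomial MvPolynomial

theorem stmt_14 (F : Type*) [Field F] [DecidableEq F] (n t : ℕ) (hn : 3 * t + 1 ≤ n)
    (M : Finset F) (fhat : F → Polynomial F)
    (S S' : Finset F) (g g' : MvPolynomial (Fin 2) F)
    (hSM : S ⊆ M) (hS'M : S' ⊆ M)
    (hScard : n - 2 * t ≤ S.card) (hS'card : n - 2 * t ≤ S'.card)
    (hg0 : MvPolynomial.degreeOf 0 g ≤ t) (hg1 : MvPolynomial.degreeOf 1 g ≤ t)
    (hg'0 : MvPolynomial.degreeOf 0 g' ≤ t) (hg'1 : MvPolynomial.degreeOf 1 g' ≤ t)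
    (hgs : MvPolynomial.rename (Equiv.swap (0 : Fin 2) 1) g = g)
    (hg's : MvPolynomial.rename (Equiv.swap (0 : Fin 2) 1) g' = g')
    (hgval : ∀ i ∈ S, MvPolynomial.aeval ![Polynomial.C i, Polynomial.X] g = fhat i)
    (hg'val : ∀ i ∈ S', MvPolynomial.aeval ![Polynomial.C i, Polynomial.X] g' = fhat i)
    (hne : g ≠ g') :
    (S ∩ S').card ≤ t := by
  by_contra hcard
  push_neg at hcard
  set T := S ∩ S' with hT
  set h : MvPolynomial (Fin 2) F := g - g' with hh
  have hhne : h ≠ 0 := sub_ne_zero.mpr hne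
  have hhdeg : MvPolynomial.degreeOf 0 h ≤ t :=
    le_trans (MvPolynomial.degreeOf_sub_le 0 g g') (max_le hg0 hg'0)
  -- the embedding MvPolynomial (Fin 1) F → Polynomial F
  set e : MvPolynomial (Fin 1) F →ₐ[F] Polynomial F := MvPolynomial.aeval ![Polynomial.X] with he
  have heinj : Function.Injective e := by
    set r : Polynomial F →+* MvPolynomial (Fin 1) F :=
      Polynomial.eval₂RingHom MvPolynomial.C (MvPolynomial.X 0) with hr
    have hre : r.comp e.toRingHom = RingHom.id _ := by
      apply MvPolynomial.ringHom_ext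
      · intro a; simp [hr, he]
      · intro i
        have : i = 0 := Subsingleton.elim i 0
        subst this
        simp [hr, he]
    intro a b hab
    have := congrArg r hab
    have ha : r (e a) = a := by simpa using RingHom.congr_fun hre a
    have hb : r (e b) = b := by simpa using RingHom.congr_fun hre b
    rwa [ha, hb] at this
  set P : Polynomial (MvPolynomial (Fin 1) F) := MvPolynomial.finSuccEquiv F 1 h with hP
  set P' : Polynomial (Polynomial F) := P.map e.toRingHom with hP'
  have hPdeg : P.natDegree ≤ t := by
    rw [hP, MvPolynomial.natDegree_finSuccEquiv]; exact hhdeg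
  have hP'deg : P'.natDegree ≤ t := le_trans (Polynomial.natDegree_map_le) hPdeg
  -- evaluation relation
  have key : ∀ i : F, P'.eval (Polynomial.C i)
      = MvPolynomial.aeval ![Polynomial.C i, Polynomial.X] h := by
    intro i
    have heq : ((Polynomial.evalRingHom (Polynomial.C i)).comp
          ((Polynomial.mapRingHom e.toRingHom).comp
            ((MvPolynomial.finSuccEquiv F 1 : MvPolynomial (Fin 2) F ≃ₐ[F] _) :
              MvPolynomial (Fin 2) F →+* Polynomial (MvPolynomial (Fin 1) F))))
        = (MvPolynomial.aeval ![Polynomial.C i, Polynomial.X] :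
            MvPolynomial (Fin 2) F →ₐ[F] Polynomial F).toRingHom := by
      apply MvPolynomial.ringHom_ext
      · intro a
        simp [he, MvPolynomial.finSuccEquiv_apply]
      · intro j
        refine Fin.cases ?_ (fun k => ?_) j
        · simp [MvPolynomial.finSuccEquiv_X_zero]
        · have hk : k = 0 := Subsingleton.elim k 0
          subst hk
          rw [RingHom.comp_apply, RingHom.comp_apply, RingHom.coe_coe,
            MvPolynomial.finSuccEquiv_X_succ]
          simp [he]
    simpa [hP', hP] using RingHom.congr_fun heq h
  have hzero : ∀ i ∈ T, P'.eval (Polynomial.C i) = 0 := by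
    intro i hi
    rw [key i]
    have hiS : i ∈ S := (Finset.mem_inter.mp hi).1
    have hiS' : i ∈ S' := (Finset.mem_inter.mp hi).2
    rw [hh, map_sub, hgval i hiS, hg'val i hiS', sub_self]
  have hP'0 : P' = 0 := by
    apply Polynomial.eq_zero_of_natDegree_lt_card_of_eval_eq_zero' P' (T.image Polynomial.C)
    · intro x hx
      obtain ⟨i, hi, rfl⟩ := Finset.mem_image.mp hx
      exact hzero i hi
    · rw [Finset.card_image_of_injective _ Polynomial.C_injective]
      exact lt_of_le_of_lt hP'deg hcard
  have hP0 : P = 0 := by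
    have := Polynomial.map_injective e.toRingHom heinj
    apply this
    simpa [hP'] using hP'0
  have : h = 0 := by
    have := (MvPolynomial.finSuccEquiv F 1).injective (a₁ := h) (a₂ := 0)
    apply this
    simpa [hP] using hP0
  exact hhne this
end

section
/- Let F be a field, n > 3t, M ⊆ F with |M| = n − t, and for each i ∈ M let f̂_i be a degree-≤t univariate polynomial. Suppose S₀ ⊆ M is a maximal interpolation set (with associated symmetric bivariate degree-t polynomial f⁰, so f⁰(i,·) = f̂_i for all i ∈ S₀, and no strict superset of S₀ in M is an interpolation set for any symmetric bivariate polynomial extending these values). Then for every i ∈ M \ S₀, the number of j ∈ S₀ with f̂_i(j) ≠ f̂_j(i) is at least |S₀| − t. -/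
open Polynomial MvPolynomial

lemma aux_deg {F : Type*} [Field F] (p : MvPolynomial (Fin 2) F) (i : F) :
    (MvPolynomial.aeval ![Polynomial.C i, Polynomial.X] p).natDegree ≤
      MvPolynomial.degreeOf 1 p := by
  conv_lhs => rw [← p.support_sum_monomial_coeff]
  rw [map_sum]
  apply Polynomial.natDegree_sum_le_of_forall_le
  intro d hd
  rw [MvPolynomial.aeval_monomial]
  have h1 : (Finsupp.prod d fun k e => (![Polynomial.C i, Polynomial.X] k) ^ e) =
      (Polynomial.C i) ^ (d 0) * Polynomial.X ^ (d 1) := by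
    rw [Finsupp.prod_fintype _ _ (fun k => pow_zero _), Fin.prod_univ_two]
    simp
  rw [h1, Polynomial.algebraMap_eq, ← mul_assoc, ← Polynomial.C_pow, ← Polynomial.C_mul]
  calc (Polynomial.C (p.coeff d * i ^ (d 0)) * Polynomial.X ^ (d 1) : Polynomial F).natDegree
      ≤ (Polynomial.X ^ (d 1) : Polynomial F).natDegree := Polynomial.natDegree_C_mul_le _ _
    _ ≤ d 1 := by simp
    _ ≤ MvPolynomial.degreeOf 1 p := by
        rw [MvPolynomial.degreeOf_eq_sup]
        exact Finset.le_sup (f := fun m => m 1) hd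

lemma aux_eval {F : Type*} [Field F] (p : MvPolynomial (Fin 2) F) (i j : F) :
    (MvPolynomial.aeval ![Polynomial.C i, Polynomial.X] p).eval j =
      MvPolynomial.eval ![i, j] p := by
  induction p using MvPolynomial.induction_on with
  | C a => simp
  | add p q hp hq => simp [hp, hq]
  | mul_X p k hp =>
    fin_cases k <;> simp [hp]

lemma aux_symm {F : Type*} [Field F] (p : MvPolynomial (Fin 2) F)
    (hs : MvPolynomial.rename (Equiv.swap (0 : Fin 2) 1) p = p) (i j : F) :
    MvPolynomial.eval ![i, j] p = MvPolynomial.eval ![j, i] p := by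
  have hfun : ![i, j] ∘ (Equiv.swap (0 : Fin 2) 1) = ![j, i] := by
    funext k; fin_cases k <;> simp
  conv_lhs => rw [← hs, MvPolynomial.eval_rename, hfun]

theorem stmt_15 (F : Type*) [Field F] [DecidableEq F] (n t : ℕ) (hn : 3 * t < n)
    (M : Finset F) (hM : M.card = n - t)
    (fhat : F → Polynomial F) (hdeg : ∀ i ∈ M, (fhat i).natDegree ≤ t)
    (S₀ : Finset F) (f0 : MvPolynomial (Fin 2) F)
    (hS₀M : S₀ ⊆ M) (hS₀card : n - 2 * t ≤ S₀.card)
    (hf00 : MvPolynomial.degreeOf 0 f0 ≤ t) (hf01 : MvPolynomial.degreeOf 1 f0 ≤ t)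
    (hf0s : MvPolynomial.rename (Equiv.swap (0 : Fin 2) 1) f0 = f0)
    (hf0val : ∀ i ∈ S₀, MvPolynomial.aeval ![Polynomial.C i, Polynomial.X] f0 = fhat i)
    (hmax : ∀ (S' : Finset F) (g : MvPolynomial (Fin 2) F), S' ⊆ M → S₀ ⊂ S' →
      MvPolynomial.degreeOf 0 g ≤ t → MvPolynomial.degreeOf 1 g ≤ t →
      MvPolynomial.rename (Equiv.swap (0 : Fin 2) 1) g = g →
      ¬ (∀ i ∈ S', MvPolynomial.aeval ![Polynomial.C i, Polynomial.X] g = fhat i)) :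
    ∀ i ∈ M \ S₀,
      S₀.card - t ≤ (S₀.filter (fun j => (fhat i).eval j ≠ (fhat j).eval i)).card := by
  intro i hi
  rw [Finset.mem_sdiff] at hi
  obtain ⟨hiM, hiS⟩ := hi
  -- f0 does not interpolate at i
  have hne : MvPolynomial.aeval ![Polynomial.C i, Polynomial.X] f0 ≠ fhat i := by
    intro heq
    refine hmax (insert i S₀) f0 ?_ (Finset.ssubset_insert hiS) hf00 hf01 hf0s ?_
    · exact Finset.insert_subset hiM hS₀M
    · intro k hk
      rcases Finset.mem_insert.mp hk with rfl | hk
      · exact heq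
      · exact hf0val k hk
  set q : Polynomial F := fhat i - MvPolynomial.aeval ![Polynomial.C i, Polynomial.X] f0 with hq
  have hq0 : q ≠ 0 := by
    intro h
    exact hne (by rw [eq_comm, ← sub_eq_zero]; exact h)
  have hqdeg : q.natDegree ≤ t := by
    apply le_trans (Polynomial.natDegree_sub_le _ _)
    exact max_le (hdeg i hiM) (le_trans (aux_deg f0 i) hf01)
  -- the agreeing set is contained in roots of q
  set A := S₀.filter (fun j => (fhat i).eval j = (fhat j).eval i) with hA
  have hroot : ∀ j ∈ A, q.IsRoot j := by
    intro j hj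
    rw [hA, Finset.mem_filter] at hj
    obtain ⟨hjS, hjv⟩ := hj
    have h1 : (fhat j).eval i = (MvPolynomial.aeval ![Polynomial.C i, Polynomial.X] f0).eval j := by
      rw [← hf0val j hjS, aux_eval, aux_eval, aux_symm f0 hf0s]
    simp [hq, Polynomial.IsRoot, hjv, h1]
  have hAcard : A.card ≤ t := by
    have hsub : A ⊆ q.roots.toFinset := by
      intro j hj
      rw [Multiset.mem_toFinset, Polynomial.mem_roots hq0]
      exact hroot j hj
    calc A.card ≤ q.roots.toFinset.card := Finset.card_le_card hsub
      _ ≤ Multiset.card q.roots := Multiset.toFinset_card_le _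
      _ ≤ q.natDegree := Polynomial.card_roots' q
      _ ≤ t := hqdeg
  have hsplit : A.card + (S₀.filter (fun j => (fhat i).eval j ≠ (fhat j).eval i)).card = S₀.card :=
    Finset.card_filter_add_card_filter_not (fun j => (fhat i).eval j = (fhat j).eval i)
  omega
end

section
/- Let n, t be natural numbers with n ≥ 3t + 1. Suppose X₁, …, X_m are independent random variables, each uniformly distributed on {0, 1, …, u−1} where u = ⌈0.87n⌉ and m ≥ n/3. Then for each v ∈ {0,1}, the probability that [∃ i, X_i = 0] (interpreted as outcome 0) is at least 1/4, and the probability that [∀ i ≤ n, X_i ≠ 0] (interpreted as outcome 1, with at most n variables) is at least 1/4, provided n ≥ 4. -/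
/-! The event "no `X i` vanishes" has probability `(1 - 1/u)^m` by independence. Since
`m/u ≥ 1/3`, this is at most `exp (-1/3) ≤ 3/4`; since `u - 1 ≥ 3n/4` and `m ≤ n`, it is at least
`exp (-n/(u-1)) ≥ exp (-4/3) ≥ 1/4`, as `log 4 > 4/3`. -/

open MeasureTheory ProbabilityTheory

theorem measure_forall_ne_eq_one_sub_pow {Ω ι β : Type*} [MeasurableSpace Ω] {μ : Measure Ω}
    [IsProbabilityMeasure μ] [Fintype ι] [MeasurableSpace β] [MeasurableSingletonClass β]
    {X : ι → Ω → β} (hXmeas : ∀ i, Measurable (X i)) (hindep : iIndepFun X μ) {a : β}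
    {p : ENNReal} (hp : ∀ i, μ (X i ⁻¹' {a}) = p) :
    μ {ω | ∀ i, X i ω ≠ a} = (1 - p) ^ Fintype.card ι := by
  have hset : {ω | ∀ i, X i ω ≠ a} = ⋂ i, X i ⁻¹' {a}ᶜ := by
    ext ω
    simp
  rw [hset, hindep.meas_iInter fun i => ⟨{a}ᶜ, (measurableSet_singleton a).compl, rfl⟩]
  simp_rw [Set.preimage_compl, prob_compl_eq_one_sub (hXmeas _ (measurableSet_singleton a)), hp,
    Finset.prod_const, Finset.card_univ]

theorem measure_exists_eq_ge_one_sub {Ω ι β : Type*} [MeasurableSpace Ω] {μ : Measure Ω}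
    [IsProbabilityMeasure μ] (X : ι → Ω → β) (a : β) :
    1 - μ {ω | ∀ i, X i ω ≠ a} ≤ μ {ω | ∃ i, X i ω = a} := by
  have hcompl : {ω | ∃ i, X i ω = a} = {ω | ∀ i, X i ω ≠ a}ᶜ := by
    ext ω
    simp
  rw [hcompl, tsub_le_iff_left, ← measure_univ (μ := μ)]
  exact measure_univ_le_add_compl _

theorem one_sub_inv_pow_le_three_quarters {u m : ℕ} (hu : 0 < u) (hum : u ≤ 3 * m) :
    (1 - (u : ℝ)⁻¹) ^ m ≤ 3 / 4 := by
  have hu' : (0 : ℝ) < u := by exact_mod_cast hu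
  have hmu : (1 : ℝ) / 3 ≤ m / u := by
    rw [div_le_div_iff₀ (by norm_num) hu']
    have : (u : ℝ) ≤ 3 * m := by exact_mod_cast hum
    linarith
  have hbase : 0 ≤ 1 - (u : ℝ)⁻¹ := sub_nonneg.mpr (inv_le_one_of_one_le₀ (by exact_mod_cast hu))
  calc (1 - (u : ℝ)⁻¹) ^ m ≤ Real.exp (-(u : ℝ)⁻¹) ^ m := by
        gcongr
        linarith [Real.add_one_le_exp (-(u : ℝ)⁻¹)]
    _ = (Real.exp (m / u))⁻¹ := by
        rw [← Real.exp_nat_mul, ← Real.exp_neg]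
        ring_nf
    _ ≤ (4 / 3)⁻¹ := by
        gcongr
        linarith [Real.add_one_le_exp (m / u : ℝ)]
    _ = 3 / 4 := by norm_num

theorem quarter_le_one_sub_inv_pow {u n : ℕ} (hun : 3 * n + 4 ≤ 4 * u) :
    1 / 4 ≤ (1 - (u : ℝ)⁻¹) ^ n := by
  rcases Nat.eq_zero_or_pos n with rfl | hnpos
  · norm_num
  have hu1 : (1 : ℝ) < u := by exact_mod_cast (by omega : 1 < u)
  have hbase : 0 < 1 - (u : ℝ)⁻¹ := sub_pos.mpr (inv_lt_one_of_one_lt₀ hu1)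
  have hn : (n : ℝ) / (u - 1) ≤ 4 / 3 := by
    rw [div_le_div_iff₀ (by linarith) (by norm_num)]
    have : (3 * n + 4 : ℝ) ≤ 4 * u := by exact_mod_cast hun
    linarith
  -- `log (1 - 1/u) ≥ 1 - (1 - 1/u)⁻¹ = -1/(u-1)`
  have hlog : -(1 / ((u : ℝ) - 1)) ≤ Real.log (1 - (u : ℝ)⁻¹) := by
    convert Real.one_sub_inv_le_log_of_pos hbase using 1
    have : (u : ℝ) - 1 ≠ 0 := by linarith
    have : (u : ℝ) ≠ 0 := by linarith
    field_simp
    ring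
  calc (1 / 4 : ℝ) = Real.exp (-(2 * Real.log 2)) := by
        rw [Real.exp_neg, ← Real.log_rpow two_pos, Real.exp_log (by positivity)]
        norm_num
    _ ≤ Real.exp (n * -(1 / ((u : ℝ) - 1))) := by
        gcongr
        have := Real.log_two_gt_d9
        rw [mul_neg, mul_one_div]
        linarith
    _ ≤ Real.exp (n * Real.log (1 - (u : ℝ)⁻¹)) := by gcongr
    _ = (1 - (u : ℝ)⁻¹) ^ n := by rw [← Real.log_pow, Real.exp_log (pow_pos hbase n)]

theorem three_mul_add_four_le_four_mul_ceil {n : ℕ} (hn : 4 ≤ n) :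
    3 * n + 4 ≤ 4 * ⌈(0.87 : ℝ) * n⌉₊ := by
  rcases le_or_gt n 8 with hsmall | hlarge
  · interval_cases n <;> norm_num
  · have hceil : (0.87 : ℝ) * n ≤ ⌈(0.87 : ℝ) * n⌉₊ := Nat.le_ceil _
    have : (9 : ℝ) ≤ n := by exact_mod_cast hlarge
    exact_mod_cast (by linarith : (3 * n + 4 : ℝ) ≤ 4 * ⌈(0.87 : ℝ) * n⌉₊)

theorem ceil_mul_le_self {c : ℝ} (hc : c ≤ 1) (n : ℕ) : ⌈c * n⌉₊ ≤ n :=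
  Nat.ceil_le.mpr (mul_le_of_le_one_left (Nat.cast_nonneg n) hc)

theorem stmt_18_general {Ω : Type*} [MeasurableSpace Ω] (μ : Measure Ω) [IsProbabilityMeasure μ]
    (n : ℕ) (hn4 : 4 ≤ n)
    (u : ℕ) (hu : u = ⌈(0.87 : ℝ) * n⌉₊)
    (m : ℕ) (hm1 : (n : ℝ) / 3 ≤ m) (hm2 : m ≤ n)
    (X : Fin m → Ω → ℕ) (hXmeas : ∀ i, Measurable (X i))
    (hindep : iIndepFun X μ)
    (hunif : ∀ i, ∀ k < u, μ (X i ⁻¹' {k}) = 1 / u) :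
    (1 / 4 : ENNReal) ≤ μ {ω | ∃ i, X i ω = 0} ∧
    (1 / 4 : ENNReal) ≤ μ {ω | ∀ i, X i ω ≠ 0} := by
  have hun : 3 * n + 4 ≤ 4 * u := hu ▸ three_mul_add_four_le_four_mul_ceil hn4
  have hum : u ≤ 3 * m := by
    have : (n : ℝ) ≤ 3 * m := by linarith
    exact (hu ▸ ceil_mul_le_self (by norm_num) n).trans (by exact_mod_cast this)
  have hbase : 0 ≤ 1 - (u : ℝ)⁻¹ :=
    sub_nonneg.mpr (inv_le_one_of_one_le₀ (by exact_mod_cast (by omega : 1 ≤ u)))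
  have hnone : μ {ω | ∀ i, X i ω ≠ 0} = ENNReal.ofReal ((1 - (u : ℝ)⁻¹) ^ m) := by
    rw [measure_forall_ne_eq_one_sub_pow hXmeas hindep fun i => hunif i 0 (by omega),
      Fintype.card_fin, ENNReal.ofReal_pow hbase, ENNReal.ofReal_sub _ (by positivity),
      ENNReal.ofReal_one, ENNReal.ofReal_inv_of_pos (by exact_mod_cast (by omega : 0 < u)),
      ENNReal.ofReal_natCast, one_div]
  have hquarter : (1 / 4 : ENNReal) = ENNReal.ofReal (1 / 4) := by
    rw [one_div, one_div, ENNReal.ofReal_inv_of_pos (by norm_num), ENNReal.ofReal_ofNat]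
  constructor
  · refine le_trans ?_ (measure_exists_eq_ge_one_sub X 0)
    rw [hnone, hquarter, ← ENNReal.ofReal_one, ← ENNReal.ofReal_sub _ (pow_nonneg hbase m)]
    exact ENNReal.ofReal_le_ofReal (by linarith [one_sub_inv_pow_le_three_quarters (by omega) hum])
  · rw [hnone, hquarter]
    exact ENNReal.ofReal_le_ofReal <| (quarter_le_one_sub_inv_pow hun).trans <|
      pow_le_pow_of_le_one hbase (by simp) hm2

theorem stmt_18 {Ω : Type*} [MeasurableSpace Ω] (μ : Measure Ω) [IsProbabilityMeasure μ]
    (n t : ℕ) (hnt : 3 * t + 1 ≤ n) (hn4 : 4 ≤ n)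
    (u : ℕ) (hu : u = ⌈(0.87 : ℝ) * n⌉₊)
    (m : ℕ) (hm1 : (n : ℝ) / 3 ≤ m) (hm2 : m ≤ n)
    (X : Fin m → Ω → ℕ) (hXmeas : ∀ i, Measurable (X i))
    (hindep : iIndepFun X μ)
    (hrange : ∀ i ω, X i ω < u)
    (hunif : ∀ i, ∀ k < u, μ (X i ⁻¹' {k}) = 1 / u) :
    (1 / 4 : ENNReal) ≤ μ {ω | ∃ i, X i ω = 0} ∧
    (1 / 4 : ENNReal) ≤ μ {ω | ∀ i, X i ω ≠ 0} :=
  stmt_18_general μ n hn4 u hu m hm1 hm2 X hXmeas hindep hunif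
end

section
/- Let F be a field with at least n distinct designated points 1,…,n, let t < n, and let f be a random symmetric bivariate polynomial of degree ≤ t in each variable, chosen uniformly among those with f(0,0) = s for a fixed secret s. For any set B of at most t indices, the joint distribution of the univariate polynomials {f(i,·) : i ∈ B} is independent of s. -/
open MvPolynomial

/-!
Since no point of `B` is `0`, a rescaled nodal polynomial gives `q` of degree `≤ |B| ≤ t` with
`q(0) = 1` and `q = 0` on `B`. Then `H(x, y) = q(x) q(y)` is symmetric, of degree `≤ t` in each
variable, has `H(0, 0) = 1` and vanishing rows `H(i, ·)` for `i ∈ B`. Adding `(s' - s) H` is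
therefore a bijection from the polynomials with secret `s` and prescribed rows on `B` onto
those with secret `s'` and the same rows.
-/

open scoped Polynomial

section DegreeOf

variable {R σ : Type*} [CommSemiring R] [Nontrivial R]

theorem MvPolynomial.degreeOf_aeval_X_le [DecidableEq σ] (q : R[X]) (i j : σ) :
    degreeOf j (Polynomial.aeval (X i : MvPolynomial σ R) q) ≤
      if j = i then q.natDegree else 0 := by
  rw [Polynomial.aeval_eq_sum_range]
  refine (degreeOf_sum_le _ _ _).trans (Finset.sup_le fun k hk => ?_)
  rw [Finset.mem_range, Nat.lt_succ_iff] at hk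
  rw [smul_eq_C_mul]
  refine (degreeOf_C_mul_le _ _ _).trans ((degreeOf_pow_le _ _ _).trans ?_)
  rw [degreeOf_X]
  split_ifs <;> simp [hk]

end DegreeOf

section SymmProd

variable {R : Type*} [CommSemiring R]

noncomputable def symmProd (p : R[X]) : MvPolynomial (Fin 2) R :=
  Polynomial.aeval (X 0) p * Polynomial.aeval (X 1) p

theorem degreeOf_symmProd_le [Nontrivial R] (p : R[X]) (j : Fin 2) :
    degreeOf j (symmProd p) ≤ p.natDegree := by
  refine (degreeOf_mul_le _ _ _).trans ?_
  have h₀ := degreeOf_aeval_X_le p 0 j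
  have h₁ := degreeOf_aeval_X_le p 1 j
  fin_cases j <;> simp_all

theorem rename_swap_symmProd (p : R[X]) :
    rename (Equiv.swap (0 : Fin 2) 1) (symmProd p) = symmProd p := by
  simp only [symmProd, map_mul, ← Polynomial.aeval_algHom_apply, rename_X]
  simp [mul_comm]

theorem eval_symmProd (p : R[X]) (a b : R) :
    eval ![a, b] (symmProd p) = p.eval a * p.eval b := by
  rw [← aeval_eq_eval, symmProd, map_mul, ← Polynomial.aeval_algHom_apply,
    ← Polynomial.aeval_algHom_apply]
  simp

theorem aeval_C_X_symmProd (p : R[X]) (i : R) :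
    aeval ![Polynomial.C i, Polynomial.X] (symmProd p) = Polynomial.C (p.eval i) * p := by
  simp only [symmProd, map_mul, ← Polynomial.aeval_algHom_apply, aeval_X]
  simp only [Fin.isValue, Matrix.cons_val_zero, Matrix.cons_val_one, Polynomial.aeval_X_left,
    AlgHom.coe_id, id_eq]
  exact congrArg (· * p) (Polynomial.aeval_algebraMap_apply_eq_algebraMap_eval (A := R[X]) i p)

end SymmProd

section Sharing

variable {F : Type*} [Field F]

/-- `aeval ![C i, X] f` is the row `f(i, ·)`. -/
def symmSharings (t : ℕ) (B : Finset F) (g : F → F[X]) (s : F) : Set (MvPolynomial (Fin 2) F) :=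
  {f | degreeOf 0 f ≤ t ∧ degreeOf 1 f ≤ t ∧ rename (Equiv.swap (0 : Fin 2) 1) f = f ∧
    eval ![0, 0] f = s ∧ ∀ i ∈ B, aeval ![Polynomial.C i, Polynomial.X] f = g i}

theorem add_C_mul_mem_symmSharings {t : ℕ} {B : Finset F} {g : F → F[X]} {a b : F}
    {f h : MvPolynomial (Fin 2) F} (hf : f ∈ symmSharings t B g a)
    (hh : h ∈ symmSharings t B 0 b)
    (c : F) : f + C c * h ∈ symmSharings t B g (a + c * b) := by
  obtain ⟨hf₀, hf₁, hf_symm, hf_secret, hf_rows⟩ := hf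
  obtain ⟨hh₀, hh₁, hh_symm, hh_secret, hh_rows⟩ := hh
  have hdeg (j : Fin 2) (hfj : degreeOf j f ≤ t) (hhj : degreeOf j h ≤ t) :
      degreeOf j (f + C c * h) ≤ t :=
    (degreeOf_add_le _ _ _).trans (max_le hfj ((degreeOf_C_mul_le _ _ _).trans hhj))
  refine ⟨hdeg 0 hf₀ hh₀, hdeg 1 hf₁ hh₁, ?_, ?_, fun i hi => ?_⟩
  · rw [map_add, map_mul, hf_symm, hh_symm, rename_C]
  · rw [map_add, map_mul, hf_secret, eval_C, hh_secret]
  · rw [map_add, map_mul, hf_rows i hi, hh_rows i hi, Pi.zero_apply, mul_zero, add_zero]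

theorem exists_natDegree_le_card_eval_zero_eq_one {B : Finset F} (hB : (0 : F) ∉ B) :
    ∃ q : F[X], q.natDegree ≤ B.card ∧ q.eval 0 = 1 ∧ ∀ b ∈ B, q.eval b = 0 := by
  have hnodal : (Lagrange.nodal B id).eval 0 ≠ 0 :=
    Lagrange.eval_nodal_not_at_node fun b hb h => hB (h ▸ hb)
  refine ⟨Polynomial.C ((Lagrange.nodal B id).eval 0)⁻¹ * Lagrange.nodal B id, ?_, ?_, ?_⟩
  · exact Polynomial.natDegree_C_mul_le _ _ |>.trans Lagrange.natDegree_nodal.le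
  · simp [hnodal]
  · intro b hb
    have hb₀ : (Lagrange.nodal B id).eval b = 0 := Lagrange.eval_nodal_at_node (v := id) hb
    rw [Polynomial.eval_mul, hb₀, mul_zero]

theorem exists_mem_symmSharings_zero_one {t : ℕ} {B : Finset F} (hB : (0 : F) ∉ B)
    (hBt : B.card ≤ t) : ∃ h, h ∈ symmSharings t B 0 1 := by
  obtain ⟨q, hq_deg, hq_zero, hq_B⟩ := exists_natDegree_le_card_eval_zero_eq_one hB
  have hdeg (j : Fin 2) : degreeOf j (symmProd q) ≤ t :=
    (degreeOf_symmProd_le q j).trans (hq_deg.trans hBt)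
  refine ⟨symmProd q, hdeg 0, hdeg 1, rename_swap_symmProd q, ?_, fun i hi => ?_⟩
  · rw [eval_symmProd, hq_zero, mul_one]
  · rw [aeval_C_X_symmProd, hq_B i hi, map_zero, zero_mul, Pi.zero_apply]

theorem ncard_symmSharings_eq {t : ℕ} {B : Finset F} (hB : (0 : F) ∉ B) (hBt : B.card ≤ t)
    (g : F → F[X]) (s s' : F) :
    (symmSharings t B g s).ncard = (symmSharings t B g s').ncard := by
  obtain ⟨h, hh⟩ := exists_mem_symmSharings_zero_one hB hBt
  have hshift {a : F} {f} (hf : f ∈ symmSharings t B g a) (b : F) :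
      f + C (b - a) * h ∈ symmSharings t B g b := by
    simpa using add_C_mul_mem_symmSharings hf hh (b - a)
  refine Set.ncard_congr (fun f _ => f + C (s' - s) * h) (fun f hf => hshift hf s')
    (fun f₁ f₂ _ _ => add_right_cancel) (fun f hf => ⟨_, hshift hf s, ?_⟩)
  rw [add_assoc, ← add_mul, ← map_add, sub_add_sub_cancel, sub_self, map_zero, zero_mul,
    add_zero]

end Sharing

theorem stmt_19_general (F : Type*) [Field F] (n t : ℕ)
    (points : Fin n → F)
    (hnz : ∀ k, points k ≠ 0)
    (B : Finset F) (hBcard : B.card ≤ t) (hBpts : ∀ b ∈ B, ∃ k, points k = b)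
    (s s' : F) (g : F → Polynomial F) :
    {f : MvPolynomial (Fin 2) F |
        MvPolynomial.degreeOf 0 f ≤ t ∧ MvPolynomial.degreeOf 1 f ≤ t ∧
        MvPolynomial.rename (Equiv.swap (0 : Fin 2) 1) f = f ∧
        MvPolynomial.eval ![0, 0] f = s ∧
        ∀ i ∈ B, MvPolynomial.aeval ![Polynomial.C i, Polynomial.X] f = g i}.ncard
    =
    {f : MvPolynomial (Fin 2) F |
        MvPolynomial.degreeOf 0 f ≤ t ∧ MvPolynomial.degreeOf 1 f ≤ t ∧
        MvPolynomial.rename (Equiv.swap (0 : Fin 2) 1) f = f ∧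
        MvPolynomial.eval ![0, 0] f = s' ∧
        ∀ i ∈ B, MvPolynomial.aeval ![Polynomial.C i, Polynomial.X] f = g i}.ncard := by
  have hB : (0 : F) ∉ B := fun h0 => by
    obtain ⟨k, hk⟩ := hBpts 0 h0
    exact hnz k hk
  exact ncard_symmSharings_eq hB hBcard g s s'

/-- Secrecy of bivariate-polynomial secret sharing, expressed via counting: for the
uniform distribution on symmetric degree-`≤ t` bivariate polynomials with constant
term `s`, the joint distribution of the rows `f(i,·)` for `i ∈ B` (`|B| ≤ t`) does not
depend on the secret `s`; equivalently, for every candidate assignment `g` of rows,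
the number of consistent polynomials is the same for any two secrets `s`, `s'`. -/
theorem stmt_19 (F : Type*) [Field F] [Fintype F] (n t : ℕ) (ht : t < n)
    (points : Fin n → F) (hinj : Function.Injective points)
    (hnz : ∀ k, points k ≠ 0)
    (B : Finset F) (hBcard : B.card ≤ t) (hBpts : ∀ b ∈ B, ∃ k, points k = b)
    (s s' : F) (g : F → Polynomial F) :
    {f : MvPolynomial (Fin 2) F |
        MvPolynomial.degreeOf 0 f ≤ t ∧ MvPolynomial.degreeOf 1 f ≤ t ∧
        MvPolynomial.rename (Equiv.swap (0 : Fin 2) 1) f = f ∧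
        MvPolynomial.eval ![0, 0] f = s ∧
        ∀ i ∈ B, MvPolynomial.aeval ![Polynomial.C i, Polynomial.X] f = g i}.ncard
    =
    {f : MvPolynomial (Fin 2) F |
        MvPolynomial.degreeOf 0 f ≤ t ∧ MvPolynomial.degreeOf 1 f ≤ t ∧
        MvPolynomial.rename (Equiv.swap (0 : Fin 2) 1) f = f ∧
        MvPolynomial.eval ![0, 0] f = s' ∧
        ∀ i ∈ B, MvPolynomial.aeval ![Polynomial.C i, Polynomial.X] f = g i}.ncard :=
  stmt_19_general F n t points hnz B hBcard hBpts s s' g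
end
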